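/- arXiv:math/0504118 — 5 statements merged into one kernel-verified Lean document; each statement's English description precedes it below -/
import Mathlib

section
/- For every nonnegative integer k, Z(2^k) = 2^(k+1) − 1. -/
/-- The m-th triangular number. -/
def T (m : ℕ) : ℕ := m * (m + 1) / 2

/-- The pseudo-Smarandache function: the least positive m with n ∣ T m. -/
noncomputable def Z (n : ℕ) : ℕ := sInf {m : ℕ | 0 < m ∧ n ∣ T m}

theorem stmt_6 (k : ℕ) : Z (2 ^ k) = 2 ^ (k + 1) - 1 := by
  have hN : (1 : ℕ) ≤ 2 ^ (k + 1) := Nat.one_le_two_pow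
  have hmem : (2 ^ (k + 1) - 1) ∈ {m : ℕ | 0 < m ∧ 2 ^ k ∣ T m} := by
    constructor
    · have : (2 : ℕ) ≤ 2 ^ (k + 1) := by
        calc (2:ℕ) = 2 ^ 1 := rfl
        _ ≤ 2 ^ (k+1) := Nat.pow_le_pow_right (by norm_num) (by omega)
      omega
    · refine ⟨2 ^ (k + 1) - 1, ?_⟩
      unfold T
      have h1 : 2 ^ (k + 1) - 1 + 1 = 2 ^ (k + 1) := by omega
      rw [h1]
      have h2 : (2 ^ (k + 1) - 1) * 2 ^ (k + 1) = 2 * ((2 ^ (k + 1) - 1) * 2 ^ k) := by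
        rw [pow_succ]
        ring
      rw [h2, Nat.mul_div_cancel_left _ (by norm_num)]
      ring
  have hlb : ∀ m ∈ {m : ℕ | 0 < m ∧ 2 ^ k ∣ T m}, 2 ^ (k + 1) - 1 ≤ m := by
    rintro m ⟨hm, hd⟩
    have heven : 2 ∣ m * (m + 1) := (Nat.even_mul_succ_self m).two_dvd
    have hT2 : T m * 2 = m * (m + 1) := by
      unfold T; exact Nat.div_mul_cancel heven
    have hdvd : 2 ^ (k + 1) ∣ m * (m + 1) := by
      rw [← hT2, pow_succ]
      exact Nat.mul_dvd_mul hd dvd_rfl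
    have hcop : Nat.Coprime m (m + 1) := by simp
    have hpp : IsPrimePow (2 ^ (k + 1)) :=
      (Nat.prime_two.prime).isPrimePow.pow (Nat.succ_ne_zero k)
    rcases (hcop.isPrimePow_dvd_mul hpp).mp hdvd with h | h
    · have := Nat.le_of_dvd hm h; omega
    · have := Nat.le_of_dvd (by omega) h; omega
  unfold Z
  have hne : {m : ℕ | 0 < m ∧ 2 ^ k ∣ T m}.Nonempty := ⟨_, hmem⟩
  exact le_antisymm (Nat.sInf_le hmem) (hlb _ (Nat.sInf_mem hne))
end

section
/- If p is an odd prime and k is a positive integer, then Z(p^k) = p^k − 1. -/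
lemma two_T (m : ℕ) : 2 * T m = m * (m + 1) := by
  unfold T
  rw [Nat.mul_div_cancel' (Nat.even_mul_succ_self m).two_dvd]

theorem stmt_7 (p k : ℕ) (hp : p.Prime) (hodd : Odd p) (hk : 0 < k) :
    Z (p ^ k) = p ^ k - 1 := by
  have hpk : 1 < p ^ k := Nat.one_lt_pow hk.ne' hp.one_lt
  have hoddpk : Odd (p ^ k) := hodd.pow
  have hsub : p ^ k - 1 + 1 = p ^ k := by omega
  have hmem : (p ^ k - 1) ∈ {m : ℕ | 0 < m ∧ p ^ k ∣ T m} := by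
    refine ⟨by omega, ?_⟩
    obtain ⟨t, ht⟩ := Nat.Odd.sub_odd hoddpk odd_one
    refine ⟨t, ?_⟩
    have h2 : 2 * T (p ^ k - 1) = 2 * (p ^ k * t) := by
      rw [two_T, hsub, ht]; ring
    omega
  apply le_antisymm (Nat.sInf_le hmem)
  refine le_csInf ⟨_, hmem⟩ ?_
  rintro m ⟨hm, hdvd⟩
  have h1 : p ^ k ∣ m * (m + 1) := by
    rw [← two_T]; exact hdvd.mul_left 2
  have hp1 : p ∣ m ∨ p ∣ m + 1 := by
    have := (hp.dvd_mul.mp (dvd_trans (dvd_pow_self p hk.ne') h1))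
    exact this
  rcases hp1 with h | h
  · have hcop : Nat.Coprime (p ^ k) (m + 1) := by
      apply Nat.Coprime.pow_left
      rcases (Nat.coprime_or_dvd_of_prime hp (m + 1)) with hc | hc
      · exact hc
      · exfalso
        have : p ∣ 1 := by
          have := Nat.dvd_sub hc h
          simpa using this
        have := Nat.le_of_dvd one_pos this
        have := hp.two_le
        omega
    have : p ^ k ∣ m := (Nat.Coprime.dvd_of_dvd_mul_right hcop h1)
    have := Nat.le_of_dvd hm this
    omega
  · have hcop : Nat.Coprime (p ^ k) m := by
      apply Nat.Coprime.pow_left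
      rcases (Nat.coprime_or_dvd_of_prime hp m) with hc | hc
      · exact hc
      · exfalso
        have : p ∣ 1 := by
          have := Nat.dvd_sub h hc
          simpa using this
        have := Nat.le_of_dvd one_pos this
        have := hp.two_le
        omega
    have h2 : p ^ k ∣ m + 1 := hcop.dvd_of_dvd_mul_left h1
    have := Nat.le_of_dvd (by omega) h2
    omega
end

section
/- If p is an odd prime and k is a positive integer, then Z(2·p^k) = p^k − 1 when p^k ≡ 1 (mod 4), and Z(2·p^k) = p^k when p^k ≡ 3 (mod 4). -/
/-!
Since `m` and `m + 1` are coprime, a prime power `q` dividing `T m` divides one of them, so every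
admissible `m` satisfies `m ≥ q - 1`. Moreover `2q ∣ T (q - 1)` exactly when `4 ∣ q - 1`, and
`2q ∣ T q` exactly when `4 ∣ q + 1`; this decides whether the minimum is `q - 1` or `q`.
-/

theorem Z_eq_of_isLeast {n m : ℕ} (h : IsLeast {m : ℕ | 0 < m ∧ n ∣ T m} m) : Z n = m :=
  h.csInf_eq

theorem two_mul_dvd_T_iff (q m : ℕ) : 2 * q ∣ T m ↔ 4 * q ∣ m * (m + 1) := by
  rw [T, Nat.dvd_div_iff_mul_dvd (Nat.even_mul_succ_self m).two_dvd, ← mul_assoc]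
  rfl

theorem IsPrimePow.dvd_or_dvd_succ_of_two_mul_dvd_T {q m : ℕ} (hq : IsPrimePow q)
    (h : 2 * q ∣ T m) : q ∣ m ∨ q ∣ m + 1 := by
  have hcop : Nat.Coprime m (m + 1) := Nat.coprime_self_add_right.mpr (Nat.coprime_one_right m)
  rw [two_mul_dvd_T_iff] at h
  exact (hcop.isPrimePow_dvd_mul hq).mp (dvd_of_mul_left_dvd h)

theorem IsPrimePow.sub_one_le_of_two_mul_dvd_T {q m : ℕ} (hq : IsPrimePow q) (hm : 0 < m)
    (h : 2 * q ∣ T m) : q - 1 ≤ m := by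
  rcases hq.dvd_or_dvd_succ_of_two_mul_dvd_T h with hdvd | hdvd
  · exact (Nat.le_of_dvd hm hdvd).trans' (Nat.sub_le q 1)
  · exact Nat.sub_le_of_le_add (Nat.le_of_dvd m.succ_pos hdvd)

theorem two_mul_dvd_T_sub_one_iff {q : ℕ} (hq : 0 < q) : 2 * q ∣ T (q - 1) ↔ 4 ∣ q - 1 := by
  rw [two_mul_dvd_T_iff, Nat.sub_add_cancel hq, mul_comm 4, mul_comm (q - 1)]
  exact Nat.mul_dvd_mul_iff_left hq

theorem two_mul_dvd_T_self_iff {q : ℕ} (hq : 0 < q) : 2 * q ∣ T q ↔ 4 ∣ q + 1 := by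
  rw [two_mul_dvd_T_iff, mul_comm 4]
  exact Nat.mul_dvd_mul_iff_left hq

theorem IsPrimePow.Z_two_mul_of_mod_four_eq_one {q : ℕ} (hq : IsPrimePow q) (h : q % 4 = 1) :
    Z (2 * q) = q - 1 := by
  have hq1 := hq.one_lt
  refine Z_eq_of_isLeast ⟨⟨by omega, (two_mul_dvd_T_sub_one_iff (by omega)).mpr (by omega)⟩, ?_⟩
  rintro m ⟨hm, hdvd⟩
  exact hq.sub_one_le_of_two_mul_dvd_T hm hdvd

theorem IsPrimePow.Z_two_mul_of_mod_four_eq_three {q : ℕ} (hq : IsPrimePow q) (h : q % 4 = 3) :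
    Z (2 * q) = q := by
  have hq1 := hq.one_lt
  refine Z_eq_of_isLeast ⟨⟨by omega, (two_mul_dvd_T_self_iff (by omega)).mpr (by omega)⟩, ?_⟩
  rintro m ⟨hm, hdvd⟩
  have hne : m ≠ q - 1 := by
    rintro rfl
    have := (two_mul_dvd_T_sub_one_iff (by omega)).mp hdvd
    omega
  have := hq.sub_one_le_of_two_mul_dvd_T hm hdvd
  omega

theorem stmt_8_general (p k : ℕ) (hp : p.Prime) (hk : 0 < k) :
    (p ^ k % 4 = 1 → Z (2 * p ^ k) = p ^ k - 1) ∧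
    (p ^ k % 4 = 3 → Z (2 * p ^ k) = p ^ k) := by
  have hq : IsPrimePow (p ^ k) := hp.isPrimePow.pow hk.ne'
  exact ⟨hq.Z_two_mul_of_mod_four_eq_one, hq.Z_two_mul_of_mod_four_eq_three⟩

theorem stmt_8 (p k : ℕ) (hp : p.Prime) (hodd : Odd p) (hk : 0 < k) :
    (p ^ k % 4 = 1 → Z (2 * p ^ k) = p ^ k - 1) ∧
    (p ^ k % 4 = 3 → Z (2 * p ^ k) = p ^ k) :=
  stmt_8_general p k hp hk
end

section
/- For every integer n ≥ 4, (1/2)(log n)² − 0.257 ≤ ∑_{m=1}^{n} (log m)/m ≤ (1/2)(log n)² + 0.110. -/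
/-!
Since `log x / x` decreases on `[e, ∞)` and has primitive `(log x)² / 2`, the sum of `log m / m`
over `3 < m ≤ n` lies below `∫₃ⁿ log x / x = ((log n)² - (log 3)²) / 2` and the sum over
`3 ≤ m < n` lies above it. Adding the first terms, the constants `0.110` and `-0.257` are
`log 2 / 2 + log 3 / 3 - (log 3)² / 2` and `log 2 / 2 - (log 3)² / 2`, rounded outwards.
-/

open Real Finset

theorem integral_log_div_self {a b : ℝ} (ha : 0 < a) (hb : 0 < b) :
    ∫ x in a..b, log x / x = (log b ^ 2 - log a ^ 2) / 2 := by
  have hne : ∀ x ∈ Set.uIcc a b, x ≠ 0 := fun x hx => ((lt_min ha hb).trans_le hx.1).ne'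
  rw [intervalIntegral.integral_eq_sub_of_hasDerivAt (f := fun x => log x ^ 2 / 2)]
  · ring
  · intro x hx
    exact (((hasDerivAt_log (hne x hx)).pow 2).div_const 2).congr_deriv (by field_simp; ring)
  · exact ((continuousOn_log.mono fun x hx => hne x hx).div continuousOn_id hne).intervalIntegrable

theorem antitoneOn_log_div_self_Icc {a b : ℕ} (ha : 3 ≤ a) :
    AntitoneOn (fun x : ℝ => log x / x) (Set.Icc a b) := by
  have h3 : exp 1 ≤ (a : ℝ) := by
    have := exp_one_lt_d9
    have : (3 : ℝ) ≤ a := by exact_mod_cast ha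
    linarith
  exact log_div_self_antitoneOn.mono fun x hx => h3.trans hx.1

theorem sum_Ioc_log_div_self_le {a n : ℕ} (ha : 3 ≤ a) (han : a ≤ n) :
    ∑ m ∈ Ioc a n, log m / m ≤ (log n ^ 2 - log a ^ 2) / 2 := by
  have h := (antitoneOn_log_div_self_Icc (b := n) ha).sum_le_integral_Ico han
  rwa [integral_log_div_self (Nat.cast_pos.mpr (by omega)) (Nat.cast_pos.mpr (by omega)),
    sum_Ico_add' (fun m : ℕ => log m / m), Ico_add_one_add_one_eq_Ioc] at h

theorem le_sum_Ico_log_div_self {a n : ℕ} (ha : 3 ≤ a) (han : a ≤ n) :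
    (log n ^ 2 - log a ^ 2) / 2 ≤ ∑ m ∈ Ico a n, log m / m := by
  have h := (antitoneOn_log_div_self_Icc (b := n) ha).integral_le_sum_Ico han
  rwa [integral_log_div_self (Nat.cast_pos.mpr (by omega)) (Nat.cast_pos.mpr (by omega))] at h

theorem sum_Icc_one_eq_add_sum_Ioc {M : Type*} [AddCommMonoid M] (f : ℕ → M) {k n : ℕ}
    (hkn : k ≤ n) : ∑ m ∈ Icc 1 n, f m = ∑ m ∈ Icc 1 k, f m + ∑ m ∈ Ioc k n, f m := by
  have hIcc (j : ℕ) : Icc 1 j = Ioc 0 j := Icc_add_one_left_eq_Ioc 0 j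
  rw [hIcc, hIcc]
  exact (sum_Ioc_consecutive f k.zero_le hkn).symm

theorem stmt_14 (n : ℕ) (hn : 4 ≤ n) :
    (1 / 2) * (Real.log n) ^ 2 - 0.257 ≤ ∑ m ∈ Finset.Icc 1 n, Real.log m / m ∧
    ∑ m ∈ Finset.Icc 1 n, Real.log m / m ≤ (1 / 2) * (Real.log n) ^ 2 + 0.110 := by
  have hlog2 := log_two_gt_d9
  have hlog2' := log_two_lt_d9
  have hlog3 := log_three_gt_d9
  have hlog3' := log_three_lt_d9
  constructor
  · have hhead : ∑ m ∈ Icc (1 : ℕ) 2, log (m : ℝ) / (m : ℝ) = log 2 / 2 := by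
      norm_num [sum_Icc_succ_top]
    have htail : ∑ m ∈ Ico 3 n, log m / m ≤ ∑ m ∈ Ioc 2 n, log m / m := by
      refine sum_le_sum_of_subset_of_nonneg (fun m hm => ?_) fun m _ _ => ?_
      · simp only [mem_Ico, mem_Ioc] at hm ⊢; omega
      · exact div_nonneg (log_natCast_nonneg m) m.cast_nonneg
    have hintegral := le_sum_Ico_log_div_self le_rfl (by omega : 3 ≤ n)
    rw [sum_Icc_one_eq_add_sum_Ioc _ (by omega : 2 ≤ n), hhead]
    push_cast at hintegral
    nlinarith
  · have hhead : ∑ m ∈ Icc (1 : ℕ) 3, log (m : ℝ) / (m : ℝ) = log 2 / 2 + log 3 / 3 := by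
      norm_num [sum_Icc_succ_top]
    have hintegral := sum_Ioc_log_div_self_le le_rfl (by omega : 3 ≤ n)
    rw [sum_Icc_one_eq_add_sum_Ioc _ (by omega : 3 ≤ n), hhead]
    push_cast at hintegral
    nlinarith
end

section
/- For every real number α > √2, the series ∑_{n=1}^{∞} 1/Z(n)^α is convergent. -/
/-!
If `Z n = b` then `n ∣ T b`, so at most `d (T b)` integers `n` have `Z n = b`, where `d` counts
divisors. Grouping the series by the value of `Z` therefore bounds it by `∑ d (T b) / b ^ α`.
The elementary divisor bound `d N ^ 5 ≤ 263 ^ 32 * N` together with `T b ≤ b ^ 2` gives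
`d (T b) = O(b ^ (2/5))`, and `∑ b ^ (2/5 - α)` converges because `α > √2 > 7/5`.
-/

open Finset

theorem summable_comp_of_card_fiber_le {α β : Type*} {f : α → β} {g : β → ℝ} {w : β → ℕ}
    (hg : 0 ≤ g) (hw : ∀ b (s : Finset α), (∀ a ∈ s, f a = b) → #s ≤ w b)
    (hs : Summable fun b => (w b : ℝ) * g b) : Summable (g ∘ f) := by
  classical
  refine summable_of_sum_le (c := ∑' b, (w b : ℝ) * g b) (fun a => hg (f a)) fun u => ?_
  calc ∑ a ∈ u, g (f a)
      = ∑ b ∈ u.image f, #{a ∈ u | f a = b} • g b := sum_comp g f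
    _ ≤ ∑ b ∈ u.image f, (w b : ℝ) * g b := by
      refine sum_le_sum fun b _ => ?_
      rw [nsmul_eq_mul]
      gcongr
      · exact hg b
      · exact hw b _ fun a ha => (mem_filter.1 ha).2
    _ ≤ ∑' b, (w b : ℝ) * g b :=
      hs.sum_le_tsum _ fun b _ => mul_nonneg (Nat.cast_nonneg _) (hg b)

theorem succ_pow_five_le_mul_two_pow (a : ℕ) : (a + 1) ^ 5 ≤ 263 * 2 ^ a := by
  induction a with
  | zero => norm_num
  | succ a ih =>
    rcases lt_or_ge a 6 with ha | ha
    · interval_cases a <;> norm_num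
    · -- `(a + 2) / (a + 1) ≤ 8 / 7` and `(8 / 7) ^ 5 < 2`
      have h : (7 * (a + 2)) ^ 5 ≤ (8 * (a + 1)) ^ 5 := Nat.pow_le_pow_left (by omega) 5
      rw [mul_pow, mul_pow] at h
      norm_num at h
      rw [pow_succ 2 a, show a + 1 + 1 = a + 2 by ring]
      omega

theorem succ_pow_five_le_pow {p : ℕ} (hp : 32 ≤ p) (a : ℕ) : (a + 1) ^ 5 ≤ p ^ a := by
  induction a with
  | zero => simp
  | succ a ih =>
    calc (a + 1 + 1) ^ 5 ≤ (2 * (a + 1)) ^ 5 := Nat.pow_le_pow_left (by omega) 5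
      _ = 32 * (a + 1) ^ 5 := by ring
      _ ≤ p * p ^ a := Nat.mul_le_mul hp ih
      _ = p ^ (a + 1) := (pow_succ' p a).symm

theorem card_divisors_pow_five_le (N : ℕ) : #N.divisors ^ 5 ≤ 263 ^ 32 * N := by
  rcases eq_or_ne N 0 with rfl | hN
  · simp
  -- `(a + 1) ^ 5 ≤ p ^ a` already holds for `p ≥ 32`; each smaller prime costs a factor 263.
  let c : ℕ → ℕ := fun p => if p ∈ range 32 then 263 else 1
  have hlocal : ∀ p ∈ N.primeFactors,
      (N.factorization p + 1) ^ 5 ≤ c p * p ^ N.factorization p := by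
    intro p hp
    by_cases h32 : p ∈ range 32
    · simp only [c, if_pos h32]
      exact (succ_pow_five_le_mul_two_pow _).trans <|
        Nat.mul_le_mul_left _ <| Nat.pow_le_pow_left (Nat.prime_of_mem_primeFactors hp).two_le _
    · simp only [c, if_neg h32, one_mul]
      exact succ_pow_five_le_pow (by simpa using h32) _
  have hc : ∏ p ∈ N.primeFactors, c p ≤ 263 ^ 32 := by
    rw [prod_ite_mem, prod_const]
    exact Nat.pow_le_pow_right (by norm_num) <| (card_le_card inter_subset_right).trans (by simp)
  calc #N.divisors ^ 5 = ∏ p ∈ N.primeFactors, (N.factorization p + 1) ^ 5 := by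
        rw [Nat.card_divisors hN, prod_pow]
    _ ≤ ∏ p ∈ N.primeFactors, c p * p ^ N.factorization p := prod_le_prod' hlocal
    _ = (∏ p ∈ N.primeFactors, c p) * N := by
        rw [prod_mul_distrib, ← Nat.prod_primeFactors_pow_factorization hN]
    _ ≤ 263 ^ 32 * N := Nat.mul_le_mul_right _ hc

theorem T_odd (k : ℕ) : T (2 * k + 1) = (2 * k + 1) * (k + 1) := by
  rw [T, show (2 * k + 1) * (2 * k + 1 + 1) = 2 * ((2 * k + 1) * (k + 1)) by ring,
    Nat.mul_div_cancel_left _ two_pos]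

theorem T_pos {m : ℕ} (hm : 0 < m) : 0 < T m :=
  Nat.div_pos (by nlinarith) two_pos

theorem T_le_sq (m : ℕ) : T m ≤ m ^ 2 :=
  Nat.div_le_of_le_mul (by nlinarith)

theorem Z_pos_and_dvd_T {n : ℕ} (hn : n ≠ 0) : 0 < Z n ∧ n ∣ T (Z n) := by
  obtain ⟨k, rfl⟩ : ∃ k, n = k + 1 := ⟨n - 1, by omega⟩
  have hne : {m : ℕ | 0 < m ∧ k + 1 ∣ T m}.Nonempty :=
    ⟨2 * k + 1, by omega, by rw [T_odd]; exact Dvd.intro_left _ rfl⟩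
  exact Nat.sInf_mem hne

theorem card_le_card_divisors_T {s : Finset ℕ} {b : ℕ} (hs : ∀ n ∈ s, Z (n + 1) = b) :
    #s ≤ #(T b).divisors := by
  refine card_le_card_of_injOn (· + 1) (fun n hn => ?_) fun _ _ _ _ h => by simpa using h
  obtain ⟨hpos, hdvd⟩ := Z_pos_and_dvd_T n.succ_ne_zero
  rw [hs n hn] at hpos hdvd
  exact Nat.mem_divisors.2 ⟨hdvd, (T_pos hpos).ne'⟩

theorem card_divisors_T_le (m : ℕ) : (#(T m).divisors : ℝ) ≤ 263 ^ 7 * (m : ℝ) ^ (2 / 5 : ℝ) := by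
  have hm : ((m : ℝ) ^ (2 / 5 : ℝ)) ^ 5 = (m : ℝ) ^ 2 := by
    rw [← Real.rpow_natCast, ← Real.rpow_mul (Nat.cast_nonneg _)]
    norm_num
  have hnat : #(T m).divisors ^ 5 ≤ 263 ^ 35 * m ^ 2 :=
    calc #(T m).divisors ^ 5 ≤ 263 ^ 32 * T m := card_divisors_pow_five_le _
      _ ≤ 263 ^ 35 * m ^ 2 := Nat.mul_le_mul (by norm_num) (T_le_sq m)
  refine le_of_pow_le_pow_left₀ (n := 5) (by norm_num) (by positivity) ?_
  rw [mul_pow, hm]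
  exact_mod_cast hnat

theorem summable_card_divisors_T_mul_rpow_neg {α : ℝ} (hα : 7 / 5 < α) :
    Summable fun m : ℕ => (#(T m).divisors : ℝ) * (m : ℝ) ^ (-α) := by
  refine .of_nonneg_of_le (fun m => by positivity) (fun m => ?_)
    ((Real.summable_nat_rpow.2 (by linarith : 2 / 5 - α < -1)).mul_left (263 ^ 7))
  calc (#(T m).divisors : ℝ) * (m : ℝ) ^ (-α)
      ≤ 263 ^ 7 * (m : ℝ) ^ (2 / 5 : ℝ) * (m : ℝ) ^ (-α) := by
        gcongr
        exact card_divisors_T_le m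
    _ = 263 ^ 7 * (m : ℝ) ^ (2 / 5 - α) := by
        rw [mul_assoc, ← Real.rpow_add' (Nat.cast_nonneg _) (by linarith), sub_eq_add_neg]

theorem stmt_18 (α : ℝ) (hα : Real.sqrt 2 < α) :
    Summable (fun n : ℕ => 1 / (Z (n + 1) : ℝ) ^ α) := by
  have hα' : 7 / 5 < α := lt_trans ((Real.lt_sqrt (by norm_num)).2 (by norm_num)) hα
  have h := summable_comp_of_card_fiber_le (f := fun n => Z (n + 1))
    (g := fun b : ℕ => (b : ℝ) ^ (-α)) (fun b => by positivity)
    (fun b _ hs => card_le_card_divisors_T hs) (summable_card_divisors_T_mul_rpow_neg hα')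
  refine h.congr fun n => ?_
  simp [Real.rpow_neg (Nat.cast_nonneg _)]
end
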